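/- arXiv:math/0511290 — 3 statements merged into one kernel-verified Lean document; each statement's English description precedes it below -/
import Mathlib

section
/- A frequency vector x ∈ ℕ^p is an indispensable monomial if and only if x is a minimal multi-element, i.e., |F_{Ax}| ≥ 2 and |F_{A(x−e_i)}| = 1 for every i ∈ supp(x). -/
open scoped BigOperators

section Defs

variable {ι κ : Type*} [Fintype ι]

/-- Embed a frequency vector `x ∈ ℕ^ι` into `ℤ^ι`. -/
def natToInt (x : ι → ℕ) : ι → ℤ := fun i => (x i : ℤ)

/-- The fiber of `t`: all frequency vectors `x` with `A x = t`. -/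
def fiberOf (A : Matrix κ ι ℤ) (t : κ → ℤ) : Set (ι → ℕ) :=
  {x | A.mulVec (natToInt x) = t}

/-- A move for `A`: an integer vector in the kernel of `A`. -/
def IsMove (A : Matrix κ ι ℤ) (z : ι → ℤ) : Prop := A.mulVec z = 0

/-- The positive part `z⁺` of an integer vector, as a frequency vector. -/
def posOf (z : ι → ℤ) : ι → ℕ := fun i => (z i).toNat

/-- The negative part `z⁻` of an integer vector, as a frequency vector. -/
def negOf (z : ι → ℤ) : ι → ℕ := fun i => (-z i).toNat

/-- The degree of a move: `deg z = |z⁺|`. -/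
def degOf (z : ι → ℤ) : ℕ := ∑ i, posOf z i

/-- One step: add or subtract one move of `B`, staying in `ℕ^ι`. -/
def MStep (B : Set (ι → ℤ)) (x y : ι → ℕ) : Prop :=
  ∃ z ∈ B, natToInt y = natToInt x + z ∨ natToInt y = natToInt x - z

/-- `y` is accessible from `x` by the moves of `B` (staying nonnegative throughout,
since all intermediate points are frequency vectors). -/
def Accessible (B : Set (ι → ℤ)) : (ι → ℕ) → (ι → ℕ) → Prop :=
  Relation.ReflTransGen (MStep B)

/-- A Markov basis: a finite set of moves such that every fiber forms a single
equivalence class for mutual accessibility. -/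
def IsMarkovBasis (A : Matrix κ ι ℤ) (B : Set (ι → ℤ)) : Prop :=
  B.Finite ∧ (∀ z ∈ B, IsMove A z) ∧
    ∀ t : κ → ℤ, ∀ x ∈ fiberOf A t, ∀ y ∈ fiberOf A t, Accessible B x y

/-- A minimal Markov basis: no proper subset is a Markov basis. -/
def IsMinimalMarkovBasis (A : Matrix κ ι ℤ) (B : Set (ι → ℤ)) : Prop :=
  IsMarkovBasis A B ∧ ∀ B' ⊂ B, ¬ IsMarkovBasis A B'

/-- An indispensable monomial: every Markov basis contains a move whose
positive or negative part is `x`. -/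
def IsIndispensableMonomial (A : Matrix κ ι ℤ) (x : ι → ℕ) : Prop :=
  ∀ B : Set (ι → ℤ), IsMarkovBasis A B → ∃ z ∈ B, posOf z = x ∨ negOf z = x

/-- `B_n`: the set of moves of degree at most `n`. -/
def Bmoves (A : Matrix κ ι ℤ) (n : ℕ) : Set (ι → ℤ) :=
  {z | IsMove A z ∧ degOf z ≤ n}

/-- The sample size `|t|` of a sufficient statistic `t` (well defined on nonempty
fibers under homogeneity). -/
noncomputable def sampleSize (A : Matrix κ ι ℤ) (t : κ → ℤ) : ℕ :=
  sInf {n | ∃ x ∈ fiberOf A t, ∑ i, x i = n}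

/-- The `B_{|t|-1}`-equivalence classes of the fiber of `t`. -/
noncomputable def fiberClasses (A : Matrix κ ι ℤ) (t : κ → ℤ) : Set (Set (ι → ℕ)) :=
  {C | ∃ x ∈ fiberOf A t,
    C = {y | y ∈ fiberOf A t ∧ Accessible (Bmoves A (sampleSize A t - 1)) x y}}

/-- Homogeneity: some rational vector `w` has `w ⬝ aᵢ = 1` for every column `aᵢ`. -/
def IsHomogeneousMatrix [Fintype κ] (A : Matrix κ ι ℤ) : Prop :=
  ∃ w : κ → ℚ, ∀ i : ι, ∑ j, w j * (A j i : ℚ) = 1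

end Defs

/-- `x` is a minimal multi-element: its fiber has at least two elements, while
removing any unit from its support yields a one-element fiber. -/
def IsMinimalMultiElement {p d : ℕ} (A : Matrix (Fin d) (Fin p) ℤ) (x : Fin p → ℕ) : Prop :=
  2 ≤ (fiberOf A (A.mulVec (natToInt x))).encard ∧
    ∀ i : Fin p, 0 < x i →
      (fiberOf A (A.mulVec (natToInt (x - Pi.single i 1)))).encard = 1

/-!
If `x` is a minimal multi-element, a nonzero move `z` with `x + z ≥ 0` must have `z⁻ = x`:
otherwise `z⁻ᵢ < xᵢ` for some `i`, and `x - eᵢ`, `x + z - eᵢ` are two distinct points of one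
fiber. A Markov basis has to move `x` to the other points of its fiber, so it contains such a move.

Conversely, suppose the fiber of some `m < x` contains a second point `y`. Each basis move
`±(x - r)` can then be traded for `(y + (x - m)) - r` followed by `m - y`, and neither of these
has a part equal to `x` (homogeneity gives `|y| = |m|`). Starting from the Graver basis, a finite
Markov basis, this yields a Markov basis that avoids `x`.
-/

open Matrix

section Moves

variable {ι κ : Type*}

@[simp]
lemma natToInt_apply (x : ι → ℕ) (i : ι) : natToInt x i = x i := rfl

lemma natToInt_injective : Function.Injective (natToInt (ι := ι)) :=
  fun _ _ h => funext fun i => by simpa using congrFun h i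

lemma natToInt_add (a b : ι → ℕ) : natToInt (a + b) = natToInt a + natToInt b := by
  ext i; simp

lemma natToInt_sub {a b : ι → ℕ} (h : b ≤ a) : natToInt (a - b) = natToInt a - natToInt b := by
  ext i; simp [Nat.cast_sub (h i)]

lemma natToInt_posOf_sub_negOf (z : ι → ℤ) : natToInt (posOf z) - natToInt (negOf z) = z := by
  ext i; simp only [Pi.sub_apply, natToInt_apply, posOf, negOf]; omega

lemma posOf_neg (z : ι → ℤ) : posOf (-z) = negOf z := rfl

lemma negOf_neg (z : ι → ℤ) : negOf (-z) = posOf z := by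
  ext i; simp [posOf, negOf]

lemma eq_zero_of_le_negOf {z : ι → ℤ} {x : ι → ℕ} (hx : posOf z = x) (hle : x ≤ negOf z) :
    x = 0 := by
  ext i
  have hle := hle i
  have hx := congrFun hx i
  simp only [posOf, negOf, Pi.zero_apply] at hle hx ⊢
  omega

lemma posOf_ne_negOf {z : ι → ℤ} (hz : z ≠ 0) : posOf z ≠ negOf z := fun h =>
  hz <| by rw [← natToInt_posOf_sub_negOf z, h, sub_self]

lemma negOf_le_of_natToInt_eq_add {u v : ι → ℕ} {z : ι → ℤ}
    (h : natToInt v = natToInt u + z) : negOf z ≤ u := fun i => by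
  have := congrFun h i
  simp only [natToInt_apply, Pi.add_apply] at this
  simp only [negOf]; omega

lemma posOf_natToInt_sub_le (a b : ι → ℕ) : posOf (natToInt a - natToInt b) ≤ a := fun i => by
  simp only [posOf, Pi.sub_apply, natToInt_apply]; omega

lemma negOf_natToInt_sub_le (a b : ι → ℕ) : negOf (natToInt a - natToInt b) ≤ b := fun i => by
  simp only [negOf, Pi.sub_apply, natToInt_apply]; omega

lemma single_one_le [DecidableEq ι] {x : ι → ℕ} {i : ι} (hi : 0 < x i) : Pi.single i 1 ≤ x := by
  intro j
  rcases eq_or_ne j i with rfl | hj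
  · simp only [Pi.single_eq_same]; exact hi
  · simp [hj]

variable [Fintype ι] {A : Matrix κ ι ℤ} {z z' : ι → ℤ}

lemma IsMove.neg (hz : IsMove A z) : IsMove A (-z) := by
  rw [IsMove, mulVec_neg, hz, neg_zero]

lemma IsMove.sub (hz : IsMove A z) (hz' : IsMove A z') : IsMove A (z - z') := by
  rw [IsMove, mulVec_sub, hz, hz', sub_zero]

lemma isMove_natToInt_sub {a b : ι → ℕ} (h : A *ᵥ natToInt a = A *ᵥ natToInt b) :
    IsMove A (natToInt a - natToInt b) := by
  rw [IsMove, mulVec_sub, h, sub_self]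

lemma IsMove.mulVec_posOf (hz : IsMove A z) :
    A *ᵥ natToInt (posOf z) = A *ᵥ natToInt (negOf z) := by
  rw [← sub_eq_zero, ← mulVec_sub, natToInt_posOf_sub_negOf]; exact hz

lemma IsMove.mulVec_eq_of_natToInt_eq_add (hz : IsMove A z) {u v : ι → ℕ}
    (h : natToInt v = natToInt u + z) : A *ᵥ natToInt v = A *ᵥ natToInt u := by
  rw [h, mulVec_add, hz, add_zero]

lemma sub_mem_fiberOf {u b : ι → ℕ} (hb : b ≤ u) :
    u - b ∈ fiberOf A (A *ᵥ natToInt u - A *ᵥ natToInt b) := by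
  show A *ᵥ natToInt (u - b) = _
  rw [natToInt_sub hb, mulVec_sub]

end Moves

section Accessible

variable {ι : Type*} {B B' : Set (ι → ℤ)} {u v : ι → ℕ}

lemma MStep.symm (h : MStep B u v) : MStep B v u := by
  obtain ⟨z, hz, h | h⟩ := h
  · exact ⟨z, hz, Or.inr (by rw [h, add_sub_cancel_right])⟩
  · exact ⟨z, hz, Or.inl (by rw [h, sub_add_cancel])⟩

lemma Accessible.symm (h : Accessible B u v) : Accessible B v u := by
  induction h with
  | refl => exact Relation.ReflTransGen.refl
  | tail _ hstep ih => exact Relation.ReflTransGen.head hstep.symm ih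

lemma Accessible.eq_of_forall_mStep (hstay : ∀ c, MStep B u c → c = u)
    (h : Accessible B u v) : v = u := by
  induction h with
  | refl => rfl
  | tail _ hstep ih => subst ih; exact hstay _ hstep

lemma IsMarkovBasis.of_mStep_accessible [Fintype ι] {κ : Type*} {A : Matrix κ ι ℤ}
    (hB : IsMarkovBasis A B) (hfin : B'.Finite) (hmoves : ∀ z ∈ B', IsMove A z)
    (hsim : ∀ u v, MStep B u v → Accessible B' u v) : IsMarkovBasis A B' :=
  ⟨hfin, hmoves, fun t x hx y hy => Relation.ReflTransGen.lift' id hsim _ _ (hB.2.2 t x hx y hy)⟩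

end Accessible

section Graver

variable {ι κ : Type*}

def signParts (z : ι → ℤ) : (ι → ℕ) × (ι → ℕ) := (posOf z, negOf z)

lemma signParts_injective : Function.Injective (signParts (ι := ι)) := fun a b h => by
  simp only [signParts, Prod.mk.injEq] at h
  rw [← natToInt_posOf_sub_negOf a, ← natToInt_posOf_sub_negOf b, h.1, h.2]

variable [Fintype ι] {A : Matrix κ ι ℤ}

/-- The Graver basis: the nonzero moves that are minimal for the conformal order, in which
`g ⊑ z` means `signParts g ≤ signParts z`. -/
def graverBasis (A : Matrix κ ι ℤ) : Set (ι → ℤ) :=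
  {z | Minimal (· ∈ signParts '' {g | IsMove A g ∧ g ≠ 0}) (signParts z)}

lemma isMove_of_mem_graverBasis {z : ι → ℤ} (hz : z ∈ graverBasis A) : IsMove A z ∧ z ≠ 0 := by
  obtain ⟨g, hg, hgz⟩ := hz.prop
  rwa [← signParts_injective hgz]

lemma graverBasis_finite : (graverBasis A).Finite :=
  ((setOfPred_minimal_antichain _).finite_of_partiallyWellOrderedOn
    (Set.isPWO_of_wellQuasiOrderedLE _)).preimage signParts_injective.injOn

lemma exists_mem_graverBasis_signParts_le {z : ι → ℤ} (hz : IsMove A z) (hz0 : z ≠ 0) :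
    ∃ g ∈ graverBasis A, signParts g ≤ signParts z := by
  obtain ⟨q, hqz, hq⟩ := exists_minimal_le_of_wellFoundedLT _ _
    (Set.mem_image_of_mem signParts (show z ∈ {g | IsMove A g ∧ g ≠ 0} from ⟨hz, hz0⟩))
  obtain ⟨g, -, rfl⟩ := hq.prop
  exact ⟨g, hq, hqz⟩

lemma sum_natAbs_sub_add_sum_natAbs {g z : ι → ℤ} (h : signParts g ≤ signParts z) :
    ∑ i, (z i - g i).natAbs + ∑ i, (g i).natAbs = ∑ i, (z i).natAbs := by
  rw [← Finset.sum_add_distrib]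
  refine Finset.sum_congr rfl fun i _ => ?_
  have hpos := h.1 i
  have hneg := h.2 i
  simp only [signParts, posOf, negOf] at hpos hneg
  omega

lemma accessible_graverBasis {x y : ι → ℕ} (h : A *ᵥ natToInt x = A *ᵥ natToInt y) :
    Accessible (graverBasis A) x y := by
  induction hn : ∑ i, (natToInt y i - natToInt x i).natAbs using Nat.strong_induction_on
    generalizing x with
  | _ n ih =>
    by_cases hxy : x = y
    · exact hxy ▸ Relation.ReflTransGen.refl
    -- walk from `x` along a Graver move `g` conformal to `y - x`; this shortens the distance
    obtain ⟨g, hg, hgd⟩ := exists_mem_graverBasis_signParts_le (isMove_natToInt_sub h.symm)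
      (sub_ne_zero.mpr (natToInt_injective.ne (Ne.symm hxy)))
    obtain ⟨hgmove, hg0⟩ := isMove_of_mem_graverBasis hg
    have hneg : negOf g ≤ x := hgd.2.trans (negOf_natToInt_sub_le y x)
    have hx' : natToInt (x - negOf g + posOf g) = natToInt x + g := by
      conv_rhs => rw [← natToInt_posOf_sub_negOf g]
      rw [natToInt_add, natToInt_sub hneg]
      abel
    have hg_pos : 0 < ∑ i, (g i).natAbs := by
      obtain ⟨i, hi⟩ := Function.ne_iff.mp hg0
      exact Finset.sum_pos' (fun _ _ => Nat.zero_le _) ⟨i, Finset.mem_univ _, Int.natAbs_pos.mpr hi⟩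
    have hdist := sum_natAbs_sub_add_sum_natAbs hgd
    simp only [Pi.sub_apply] at hdist
    refine Relation.ReflTransGen.head ⟨g, hg, Or.inl hx'⟩ (ih _ ?_ ?_ rfl)
    · simp only [hx', Pi.add_apply, sub_add_eq_sub_sub]
      omega
    · rw [hgmove.mulVec_eq_of_natToInt_eq_add hx', h]

lemma graverBasis_isMarkovBasis : IsMarkovBasis A (graverBasis A) :=
  ⟨graverBasis_finite, fun _ hz => (isMove_of_mem_graverBasis hz).1,
    fun _ _ hx _ hy => accessible_graverBasis (hx.trans hy.symm)⟩

end Graver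

lemma IsHomogeneousMatrix.sum_eq_of_mulVec_eq {ι κ : Type*} [Fintype ι] [Fintype κ]
    {A : Matrix κ ι ℤ} (hA : IsHomogeneousMatrix A) {u v : ι → ℕ}
    (h : A *ᵥ natToInt u = A *ᵥ natToInt v) : ∑ i, u i = ∑ i, v i := by
  obtain ⟨w, hw⟩ := hA
  have hweigh : ∀ x : ι → ℕ, ∑ j, w j * ((A *ᵥ natToInt x) j : ℚ) = ∑ i, (x i : ℚ) := by
    intro x
    simp only [mulVec, dotProduct, natToInt_apply, Int.cast_sum, Int.cast_mul, Int.cast_natCast,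
      Finset.mul_sum, ← mul_assoc]
    rw [Finset.sum_comm]
    exact Finset.sum_congr rfl fun i _ => by rw [← Finset.sum_mul, hw i, one_mul]
  have := hweigh u
  rw [h, hweigh v] at this
  exact_mod_cast this.symm

section Replacement

variable {ι κ : Type*} {B : Set (ι → ℤ)} {x m y : ι → ℕ}

/-- Every move `±z` of `B` with `z⁺ = x` is replaced by `z - (m - y)`; together with `m - y`
it reproduces the step by `z` in two steps. -/
def replaceMoves (B : Set (ι → ℤ)) (x m y : ι → ℕ) : Set (ι → ℤ) :=
  {z ∈ B | posOf z ≠ x ∧ negOf z ≠ x} ∪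
    insert (natToInt m - natToInt y)
      ((· - (natToInt m - natToInt y)) '' {z | (z ∈ B ∨ -z ∈ B) ∧ posOf z = x})

lemma sub_natToInt_sub_eq {z : ι → ℤ} (hz : posOf z = x) (hmx : m ≤ x) :
    z - (natToInt m - natToInt y) = natToInt (y + (x - m)) - natToInt (negOf z) := by
  conv_lhs => rw [← natToInt_posOf_sub_negOf z]
  rw [hz, natToInt_add, natToInt_sub hmx]
  abel

lemma replaceMoves_finite (hB : B.Finite) : (replaceMoves B x m y).Finite := by
  refine (hB.subset fun _ hz => hz.1).union (Set.Finite.insert _ (Set.Finite.image _ ?_))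
  exact (hB.union (hB.image Neg.neg)).subset fun z hz =>
    hz.1.imp id fun h => ⟨-z, h, neg_neg z⟩

variable [Fintype ι] {A : Matrix κ ι ℤ}

lemma isMove_of_mem_replaceMoves (hB : ∀ z ∈ B, IsMove A z)
    (hy : A *ᵥ natToInt y = A *ᵥ natToInt m) : ∀ z ∈ replaceMoves B x m y, IsMove A z := by
  have hz₁ : IsMove A (natToInt m - natToInt y) := isMove_natToInt_sub hy.symm
  rintro _ (⟨hzB, -⟩ | rfl | ⟨z, ⟨hzB | hzB, -⟩, rfl⟩)
  · exact hB _ hzB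
  · exact hz₁
  · exact (hB z hzB).sub hz₁
  · simpa using (hB _ hzB).neg.sub hz₁

lemma le_antisymm_of_sum_eq {a b : ι → ℕ} (hab : a ≤ b) (hs : ∑ i, a i = ∑ i, b i) : a = b :=
  funext fun i => (Finset.sum_eq_sum_iff_of_le fun i _ => hab i).mp hs i (Finset.mem_univ i)

lemma parts_ne_of_mem_replaceMoves (hmx : m < x) (hsum : ∑ i, y i = ∑ i, m i) (hym : y ≠ m) :
    ∀ z ∈ replaceMoves B x m y, posOf z ≠ x ∧ negOf z ≠ x := by
  have hmy : ¬ m ≤ y := fun h => hym (le_antisymm_of_sum_eq h hsum.symm).symm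
  rintro _ (⟨-, hz⟩ | rfl | ⟨z, ⟨-, hzx⟩, rfl⟩)
  · exact hz
  · refine ⟨fun h => hmx.not_ge (h ▸ posOf_natToInt_sub_le m y), fun h => ?_⟩
    exact hmy (hmx.le.trans (h ▸ negOf_natToInt_sub_le m y))
  · beta_reduce
    rw [sub_natToInt_sub_eq hzx hmx.le]
    refine ⟨fun h => hmy ?_, fun h => ?_⟩
    · have hle := h ▸ posOf_natToInt_sub_le (y + (x - m)) (negOf z)
      rwa [← add_tsub_cancel_of_le hmx.le, add_tsub_cancel_left, add_le_add_iff_right] at hle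
    · have hx0 := eq_zero_of_le_negOf hzx (h ▸ negOf_natToInt_sub_le _ _)
      exact (hx0 ▸ hmx).not_ge zero_le

lemma accessible_replaceMoves_of_mStep (hmx : m ≤ x) {u v : ι → ℕ} (h : MStep B u v) :
    Accessible (replaceMoves B x m y) u v := by
  set z₁ := natToInt m - natToInt y
  -- the point `u + (z - z₁)` in between is nonnegative because `z⁻ ≤ u` whenever `u + z ≥ 0`
  have hforward : ∀ z, (z ∈ B ∨ -z ∈ B) → posOf z = x → ∀ u v : ι → ℕ,
      natToInt v = natToInt u + z → Accessible (replaceMoves B x m y) u v := by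
    intro z hzB hzx u v hv
    have hw : natToInt (u - negOf z + (y + (x - m))) = natToInt u + (z - z₁) := by
      rw [sub_natToInt_sub_eq hzx hmx, natToInt_add, natToInt_sub (negOf_le_of_natToInt_eq_add hv)]
      abel
    have hfirst : MStep (replaceMoves B x m y) u (u - negOf z + (y + (x - m))) :=
      ⟨z - z₁, Or.inr (Set.mem_insert_of_mem _ ⟨z, ⟨hzB, hzx⟩, rfl⟩), Or.inl hw⟩
    have hsecond : MStep (replaceMoves B x m y) (u - negOf z + (y + (x - m))) v :=
      ⟨z₁, Or.inr (Set.mem_insert _ _), Or.inl (by rw [hw, hv]; abel)⟩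
    exact Relation.ReflTransGen.head hfirst (Relation.ReflTransGen.single hsecond)
  have hboth : ∀ z, (z ∈ B ∨ -z ∈ B) → posOf z = x →
      (natToInt v = natToInt u + z ∨ natToInt v = natToInt u - z) →
        Accessible (replaceMoves B x m y) u v := by
    rintro z hzB hzx (hv | hv)
    · exact hforward z hzB hzx u v hv
    · exact (hforward z hzB hzx v u (by rw [hv, sub_add_cancel])).symm
  obtain ⟨z, hzB, hv⟩ := h
  by_cases hz : posOf z ≠ x ∧ negOf z ≠ x
  · exact Relation.ReflTransGen.single ⟨z, Or.inl ⟨hzB, hz⟩, hv⟩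
  simp only [not_and_or, not_not] at hz
  rcases hz with hzx | hzx
  · exact hboth z (Or.inl hzB) hzx hv
  · refine hboth (-z) (Or.inr (by rwa [neg_neg])) (by rwa [posOf_neg]) ?_
    rw [sub_neg_eq_add, ← sub_eq_add_neg]
    exact hv.symm

end Replacement

section Indispensable

variable {ι κ : Type*} [Fintype ι] {A : Matrix κ ι ℤ} {x : ι → ℕ}

lemma IsIndispensableMonomial.one_lt_encard_fiberOf (hx : IsIndispensableMonomial A x) :
    1 < (fiberOf A (A *ᵥ natToInt x)).encard := by
  obtain ⟨z, hz, hzx⟩ := hx _ graverBasis_isMarkovBasis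
  obtain ⟨hzmove, hz0⟩ := isMove_of_mem_graverBasis hz
  have hfiber : posOf z ∈ fiberOf A (A *ᵥ natToInt x) ∧ negOf z ∈ fiberOf A (A *ᵥ natToInt x) := by
    rcases hzx with rfl | rfl
    exacts [⟨rfl, hzmove.mulVec_posOf.symm⟩, ⟨hzmove.mulVec_posOf, rfl⟩]
  exact Set.one_lt_encard_iff.mpr ⟨_, _, hfiber.1, hfiber.2, posOf_ne_negOf hz0⟩

lemma IsIndispensableMonomial.fiberOf_subsingleton [Fintype κ] (hA : IsHomogeneousMatrix A)
    (hx : IsIndispensableMonomial A x) {m : ι → ℕ} (hmx : m < x) :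
    (fiberOf A (A *ᵥ natToInt m)).Subsingleton := by
  suffices h : ∀ y ∈ fiberOf A (A *ᵥ natToInt m), y = m from
    fun y hy y' hy' => (h y hy).trans (h y' hy').symm
  intro y hy
  by_contra hym
  have hB := graverBasis_isMarkovBasis.of_mStep_accessible (replaceMoves_finite graverBasis_finite)
    (isMove_of_mem_replaceMoves (fun _ hz => (isMove_of_mem_graverBasis hz).1) hy)
    (fun _ _ => accessible_replaceMoves_of_mStep (y := y) hmx.le)
  obtain ⟨z, hz, hzx⟩ := hx _ hB
  have := parts_ne_of_mem_replaceMoves hmx (hA.sum_eq_of_mulVec_eq hy) hym z hz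
  tauto

end Indispensable

section MinimalMultiElement

variable {ι κ : Type*} [Fintype ι] [DecidableEq ι] {A : Matrix κ ι ℤ} {x : ι → ℕ}

lemma negOf_eq_of_fiberOf_sub_single_subsingleton
    (hx : ∀ i, 0 < x i → (fiberOf A (A *ᵥ natToInt (x - Pi.single i 1))).Subsingleton)
    {z : ι → ℤ} (hz : IsMove A z) (hz0 : z ≠ 0) {c : ι → ℕ}
    (hc : natToInt c = natToInt x + z) : negOf z = x := by
  by_contra hne
  obtain ⟨i, hi⟩ := (Pi.lt_def.mp (lt_of_le_of_ne (negOf_le_of_natToInt_eq_add hc) hne)).2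
  have hxi : 0 < x i := (Nat.zero_le _).trans_lt hi
  have hci : 0 < c i := by
    have := congrFun hc i
    simp only [natToInt_apply, Pi.add_apply, negOf] at this hi
    omega
  have hxe := sub_mem_fiberOf (A := A) (single_one_le hxi)
  have hce := sub_mem_fiberOf (A := A) (single_one_le hci)
  rw [hz.mulVec_eq_of_natToInt_eq_add hc] at hce
  have hfiber : fiberOf A (A *ᵥ natToInt (x - Pi.single i 1)) =
      fiberOf A (A *ᵥ natToInt x - A *ᵥ natToInt (Pi.single i 1)) := congrArg _ hxe
  have hcx : c = x := (tsub_left_inj (single_one_le hci) (single_one_le hxi)).mp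
    ((hx i hxi) (hfiber ▸ hce) (hfiber ▸ hxe))
  exact hz0 (by simpa [hcx] using hc)

end MinimalMultiElement

lemma IsMinimalMultiElement.isIndispensableMonomial {p d : ℕ} {A : Matrix (Fin d) (Fin p) ℤ}
    {x : Fin p → ℕ} (hx : IsMinimalMultiElement A x) : IsIndispensableMonomial A x := by
  rintro B ⟨-, hmoves, hconn⟩
  by_contra! hB
  have hsub i (hi : 0 < x i) := Set.encard_le_one_iff_subsingleton.mp (hx.2 i hi).le
  -- no move of `B` leads out of `x`, although the fiber of `x` has a second point
  have hstay : ∀ c, MStep B x c → c = x := by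
    rintro c ⟨z, hzB, hc⟩
    by_cases hz0 : z = 0
    · subst hz0
      exact natToInt_injective (by simpa using hc)
    rcases hc with hc | hc
    · exact absurd (negOf_eq_of_fiberOf_sub_single_subsingleton hsub (hmoves z hzB) hz0 hc)
        (hB z hzB).2
    · have := negOf_eq_of_fiberOf_sub_single_subsingleton hsub (hmoves z hzB).neg
        (neg_ne_zero.mpr hz0) (by rw [hc, sub_eq_add_neg])
      exact absurd (negOf_neg z ▸ this) (hB z hzB).1
  obtain ⟨y, hy, hyx⟩ :=
    Set.exists_ne_of_one_lt_encard ((by norm_num : (1 : ℕ∞) < 2).trans_le hx.1) x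
  exact hyx ((hconn _ x rfl y hy).eq_of_forall_mStep hstay)

theorem indispensableMonomial_iff_minimalMultiElement_general
    {p d : ℕ}
    (A : Matrix (Fin d) (Fin p) ℤ) (hA : IsHomogeneousMatrix A) (x : Fin p → ℕ) :
    IsIndispensableMonomial A x ↔ IsMinimalMultiElement A x := by
  refine ⟨fun hx => ⟨Order.add_one_le_of_lt hx.one_lt_encard_fiberOf, fun i hi => ?_⟩,
    IsMinimalMultiElement.isIndispensableMonomial⟩
  have hlt : x - Pi.single i 1 < x :=
    Pi.lt_def.mpr ⟨tsub_le_self, i, by simp only [Pi.sub_apply, Pi.single_eq_same]; omega⟩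
  exact Set.encard_eq_one.mpr ⟨_, (hx.fiberOf_subsingleton hA hlt).eq_singleton_of_mem rfl⟩

/-- `x` is an indispensable monomial iff `x` is a minimal multi-element. -/
theorem indispensableMonomial_iff_minimalMultiElement
    {p d : ℕ} (hp : 0 < p) (hd : 0 < d)
    (A : Matrix (Fin d) (Fin p) ℤ) (hA : IsHomogeneousMatrix A) (x : Fin p → ℕ) :
    IsIndispensableMonomial A x ↔ IsMinimalMultiElement A x :=
  indispensableMonomial_iff_minimalMultiElement_general A hA x
end

section
/- If x ∈ ℕ^p is a minimal multi-element and n = |x|, then there is no nonzero move z with deg(z) ≤ n − 1 that is applicable to x (i.e., with x − z⁻ ∈ ℕ^p); consequently the one-element set {x} forms a single B_{n−1}-equivalence class of the fiber F_{Ax}. -/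
open scoped BigOperators

section Aux

variable {p d : ℕ}

lemma move_sum_eq_zero (A : Matrix (Fin d) (Fin p) ℤ) (hA : IsHomogeneousMatrix A)
    {z : Fin p → ℤ} (hz : IsMove A z) : ∑ i, z i = 0 := by
  obtain ⟨w, hw⟩ := hA
  have h0 : ((∑ i, z i : ℤ) : ℚ) = 0 := by
    push_cast
    calc ∑ i, (z i : ℚ) = ∑ i, (z i : ℚ) * (∑ j, w j * (A j i : ℚ)) := by
          simp [hw]
      _ = ∑ j, w j * ∑ i, ((A j i : ℚ) * (z i : ℚ)) := by
          simp only [Finset.mul_sum]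
          rw [Finset.sum_comm]
          apply Finset.sum_congr rfl
          intro j _
          apply Finset.sum_congr rfl
          intro i _
          ring
      _ = 0 := by
          apply Finset.sum_eq_zero
          intro j _
          have hj : ∑ i, A j i * z i = 0 := by
            have := congrFun hz j
            simpa [Matrix.mulVec, dotProduct] using this
          have hq : ∑ i, ((A j i : ℚ) * (z i : ℚ)) = 0 := by exact_mod_cast hj
          rw [hq, mul_zero]
  exact_mod_cast h0

lemma pos_sub_neg (z : Fin p → ℤ) (i : Fin p) :
    (posOf z i : ℤ) - (negOf z i : ℤ) = z i := by
  simp only [posOf, negOf]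
  omega

lemma deg_pos_eq_neg (A : Matrix (Fin d) (Fin p) ℤ) (hA : IsHomogeneousMatrix A)
    {z : Fin p → ℤ} (hz : IsMove A z) : ∑ i, posOf z i = ∑ i, negOf z i := by
  have h := move_sum_eq_zero A hA hz
  have : ((∑ i, posOf z i : ℕ) : ℤ) = ((∑ i, negOf z i : ℕ) : ℤ) := by
    push_cast
    have : ∑ i, ((posOf z i : ℤ) - (negOf z i : ℤ)) = 0 := by
      simp only [pos_sub_neg]; exact h
    rw [Finset.sum_sub_distrib] at this
    linarith
  exact_mod_cast this

lemma neighbor_mem_fiber (A : Matrix (Fin d) (Fin p) ℤ) {t : Fin d → ℤ}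
    {z : Fin p → ℤ} {y : Fin p → ℕ} (hz : IsMove A z) (hy : y ∈ fiberOf A t)
    (hle : ∀ i, negOf z i ≤ y i) :
    (fun i => y i + posOf z i - negOf z i) ∈ fiberOf A t ∧
      natToInt (fun i => y i + posOf z i - negOf z i) = natToInt y + z := by
  have hnat : natToInt (fun i => y i + posOf z i - negOf z i) = natToInt y + z := by
    funext i
    have h1 : negOf z i ≤ y i + posOf z i := le_trans (hle i) (Nat.le_add_right _ _)
    simp only [natToInt, Pi.add_apply]
    rw [Nat.cast_sub h1]
    push_cast
    have := pos_sub_neg z i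
    linarith
  constructor
  · unfold fiberOf at hy ⊢
    simp only [Set.mem_setOf_eq] at hy ⊢
    rw [hnat, Matrix.mulVec_add, hy, hz, add_zero]
  · exact hnat

lemma natToInt_inj {y x : Fin p → ℕ} (h : natToInt y = natToInt x) : y = x := by
  funext i
  have := congrFun h i
  simpa [natToInt] using this

end Aux

/-- if `x` is a minimal multi-element and `n = |x|`, then no nonzero move
of degree at most `n - 1` is applicable to `x`; consequently `{x}` forms a single
`B_{n-1}`-equivalence class of the fiber of `Ax`. -/
theorem minimalMultiElement_no_applicable_move
    {p d : ℕ} (hp : 0 < p) (hd : 0 < d)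
    (A : Matrix (Fin d) (Fin p) ℤ) (hA : IsHomogeneousMatrix A) (x : Fin p → ℕ)
    (hx : IsMinimalMultiElement A x) :
    (∀ z : Fin p → ℤ, IsMove A z → z ≠ 0 → degOf z ≤ (∑ i, x i) - 1 →
        ¬ ∀ i, negOf z i ≤ x i) ∧
      ∀ y ∈ fiberOf A (A.mulVec (natToInt x)),
        Accessible (Bmoves A ((∑ i, x i) - 1)) x y → y = x := by
  classical
  have H1 : ∀ z : Fin p → ℤ, IsMove A z → z ≠ 0 → degOf z ≤ (∑ i, x i) - 1 →
      ¬ ∀ i, negOf z i ≤ x i := by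
    intro z hzmove hzne hdeg hle
    have hdp : ∑ i, posOf z i = ∑ i, negOf z i := deg_pos_eq_neg A hA hzmove
    by_cases hn : ∑ i, x i = 0
    · -- then degOf z = 0, so z = 0
      have h0 : degOf z = 0 := by omega
      unfold degOf at h0
      have hneg0 : ∑ i, negOf z i = 0 := by omega
      apply hzne
      funext i
      have hp0 : posOf z i = 0 := by
        have := Finset.sum_eq_zero_iff.mp h0 i (Finset.mem_univ i)
        exact this
      have hn0 : negOf z i = 0 := by
        have := Finset.sum_eq_zero_iff.mp hneg0 i (Finset.mem_univ i)
        exact this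
      have := pos_sub_neg z i
      rw [hp0, hn0] at this
      simpa using this.symm
    · have hlt : ∑ i, negOf z i < ∑ i, x i := by
        unfold degOf at hdeg; omega
      have hexi : ∃ i, negOf z i < x i := by
        by_contra hc
        push_neg at hc
        have hss : ∑ i, x i ≤ ∑ i, negOf z i := Finset.sum_le_sum (fun i _ => hc i)
        omega
      obtain ⟨i, hi⟩ := hexi
      have hxi : 0 < x i := lt_of_le_of_lt (Nat.zero_le _) hi
      have henc := hx.2 i hxi
      set x' := x - Pi.single i 1 with hx'
      have hle' : ∀ j, negOf z j ≤ x' j := by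
        intro j
        by_cases hji : j = i
        · subst hji
          simp [hx', Pi.single_eq_same]
          omega
        · simp [hx', Pi.single_eq_of_ne hji]
          exact hle j
      have hx'mem : x' ∈ fiberOf A (A.mulVec (natToInt x')) := rfl
      obtain ⟨hmem, hnat⟩ := neighbor_mem_fiber A hzmove hx'mem hle'
      have hne : (fun j => x' j + posOf z j - negOf z j) ≠ x' := by
        intro heq
        apply hzne
        have : natToInt x' + z = natToInt x' := by rw [← hnat, heq]
        funext j
        have := congrFun this j
        simpa using this
      obtain ⟨a, ha⟩ := Set.encard_eq_one.mp henc
      rw [ha] at hmem hx'mem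
      exact hne (hmem.trans hx'mem.symm)
  refine ⟨H1, ?_⟩
  intro y hy hacc
  clear hy
  induction hacc with
  | refl => rfl
  | tail hab hbc ih =>
    rw [ih] at hbc
    obtain ⟨z, ⟨hzmove, hzdeg⟩, hc⟩ := hbc
    rcases hc with hc | hc
    · by_cases hz0 : z = 0
      · subst hz0
        exact natToInt_inj (by simpa using hc)
      · exfalso
        apply H1 z hzmove hz0 hzdeg
        intro i
        have h := congrFun hc i
        simp only [natToInt, Pi.add_apply] at h
        simp only [negOf]
        omega
    · by_cases hz0 : z = 0
      · subst hz0
        exact natToInt_inj (by simpa using hc)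
      · exfalso
        have hzmove' : IsMove A (-z) := by
          unfold IsMove at hzmove ⊢
          rw [Matrix.mulVec_neg, hzmove, neg_zero]
        have hdeg' : degOf (-z) ≤ (∑ i, x i) - 1 := by
          have hdp : ∑ i, posOf z i = ∑ i, negOf z i := deg_pos_eq_neg A hA hzmove
          have : degOf (-z) = ∑ i, negOf z i := by
            unfold degOf
            apply Finset.sum_congr rfl
            intro i _
            simp [posOf, negOf]
          unfold degOf at hzdeg
          omega
        apply H1 (-z) hzmove' (by simpa using hz0) hdeg'
        intro i
        have h := congrFun hc i
        simp only [natToInt, Pi.sub_apply] at h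
        simp only [negOf, Pi.neg_apply]
        omega
end

section
/- Every indispensable move belongs to every Markov basis up to sign: if z is an indispensable move and B is a Markov basis, then z ∈ B or −z ∈ B. -/
open scoped BigOperators

/-- An indispensable move: a nonzero move whose fiber consists exactly of its positive
and negative parts. -/
def IsIndispensableMove {p d : ℕ} (A : Matrix (Fin d) (Fin p) ℤ) (z : Fin p → ℤ) : Prop :=
  IsMove A z ∧ z ≠ 0 ∧
    fiberOf A (A.mulVec (natToInt (posOf z))) = {posOf z, negOf z}

/-- every indispensable move belongs, up to sign, to every Markov basis. -/
theorem indispensableMove_mem_MarkovBasis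
    {p d : ℕ} (hp : 0 < p) (hd : 0 < d)
    (A : Matrix (Fin d) (Fin p) ℤ) (hA : IsHomogeneousMatrix A)
    (z : Fin p → ℤ) (hz : IsIndispensableMove A z)
    (B : Set (Fin p → ℤ)) (hB : IsMarkovBasis A B) :
    z ∈ B ∨ -z ∈ B := by
  obtain ⟨hmove, hzne, hfib⟩ := hz
  obtain ⟨hBfin, hBmoves, hBacc⟩ := hB
  set t := A.mulVec (natToInt (posOf z)) with ht
  have hzsub : ∀ i, (natToInt (posOf z) i) - (natToInt (negOf z) i) = z i := by
    intro i; simp only [natToInt, posOf, negOf]; omega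
  have hpne : posOf z ≠ negOf z := by
    intro h
    apply hzne
    funext i
    have h2 := hzsub i
    rw [h, sub_self] at h2
    simpa using h2.symm
  have hnsub : natToInt (negOf z) = natToInt (posOf z) - z := by
    funext i
    have := hzsub i
    simp only [Pi.sub_apply]
    omega
  have hpf : posOf z ∈ fiberOf A t := rfl
  have hnf : negOf z ∈ fiberOf A t := by
    show A.mulVec (natToInt (negOf z)) = t
    rw [hnsub, Matrix.mulVec_sub, hmove, sub_zero]
  have key : ∀ x : Fin p → ℕ, Accessible B x (negOf z) → x ∈ fiberOf A t →
      x = negOf z ∨ z ∈ B ∨ -z ∈ B := by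
    intro x hx
    induction hx using Relation.ReflTransGen.head_induction_on with
    | refl => intro _; exact Or.inl rfl
    | head hstep htail ih =>
      rename_i a c
      intro haf
      obtain ⟨z', hz'B, hcase⟩ := hstep
      have hz'move : A.mulVec z' = 0 := hBmoves z' hz'B
      have haf2 : A.mulVec (natToInt a) = t := haf
      have hcf : c ∈ fiberOf A t := by
        show A.mulVec (natToInt c) = t
        rcases hcase with h | h <;>
          rw [h] <;>
          simp [Matrix.mulVec_add, Matrix.mulVec_sub, hz'move, haf2]
      rcases ih hcf with hcz | hdone
      · -- c = negOf z; a ∈ fiber = {posOf z, negOf z}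
        have haf' := haf
        rw [hfib] at haf'
        rcases haf' with hap | han
        · -- a = posOf z, step from posOf z to negOf z
          right
          subst hcz hap
          rcases hcase with h | h
          · right
            have : z' = -z := by
              funext i
              have h1 := congrFun h i
              have h2 := hzsub i
              simp only [Pi.add_apply] at h1
              simp only [Pi.neg_apply]
              omega
            rwa [this] at hz'B
          · left
            have : z' = z := by
              funext i
              have h1 := congrFun h i
              have h2 := hzsub i
              simp only [Pi.sub_apply] at h1
              omega
            rwa [this] at hz'B
        · exact Or.inl han
      · exact Or.inr hdone
  rcases key (posOf z) (hBacc t _ hpf _ hnf) hpf with h | h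
  · exact absurd h hpne
  · exact h
end
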